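/- Assume (G), and for each ψ ∈ C([-h,0],ℝ₊) let y(·,ψ) : [0,h] → B̄_b(x₂) denote the unique solution of y'(s) = −g(y(s), ψ(−s)), y(0) = x₂. Then the map Y : C([-h,0],ℝ₊) → C([0,h],ℝ), Y(ψ) := y(·,ψ), is locally Lipschitz with respect to the sup-norms. -/

import Mathlib

noncomputable section

/-- The point -s ∈ [-h, 0] for s ∈ [0, h]. -/
def negPt (h s : ℝ) (hs : s ∈ Set.Icc (0:ℝ) h) : Set.Icc (-h) (0:ℝ) :=
  ⟨-s, Set.mem_Icc.mpr ⟨by have := (Set.mem_Icc.mp hs).2; linarith,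
    by have := (Set.mem_Icc.mp hs).1; linarith⟩⟩

/-- y is a solution on [0,h] of y'(s) = -g(y(s), ψ(-s)), y(0) = x₂, with values in
B̄_b(x₂) = [x₂-b, x₂+b]. -/
def IsSolY (x₂ b h : ℝ) (g : ℝ → ℝ → ℝ) (ψ : C(Set.Icc (-h) (0:ℝ), ℝ))
    (y : ℝ → ℝ) : Prop :=
  y 0 = x₂ ∧ ∀ s : ℝ, ∀ hs : s ∈ Set.Icc (0:ℝ) h,
    y s ∈ Set.Icc (x₂ - b) (x₂ + b) ∧
    HasDerivWithinAt y (-(g (y s) (ψ (negPt h s hs)))) (Set.Icc (0:ℝ) h) s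

/-- Lemma 4.3. Under condition (G), the map Y : ψ ↦ y(·,ψ) is locally
Lipschitz with respect to the sup-norms: around every nonnegative history ψ₀ there are
δ > 0 and L ≥ 0 such that any solutions y, ȳ for nonnegative histories ψ, ψ̄ within
sup-distance δ of ψ₀ satisfy sup_{s ∈ [0,h]} |y(s) - ȳ(s)| ≤ L ‖ψ - ψ̄‖. -/
theorem statement18 (x₁ x₂ b K ε : ℝ) (hx : x₁ < x₂) (hb : 0 < b)
    (hε : 0 < ε) (hεK : ε < K) (hgap : x₂ - x₁ < b / K * ε)
    (g Dg : ℝ → ℝ → ℝ)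
    (hG1 : ∀ z : ℝ, 0 ≤ z → ∃ δ : ℝ, 0 < δ ∧ ∃ L : ℝ,
      ∀ y ∈ Set.Icc (x₂ - b) (x₂ + b), ∀ z₁ z₂ : ℝ, 0 ≤ z₁ → 0 ≤ z₂ →
        |z₁ - z| ≤ δ → |z₂ - z| ≤ δ → |g y z₁ - g y z₂| ≤ L * |z₁ - z₂|)
    (hG2d : ∀ z : ℝ, 0 ≤ z → ∀ y ∈ Set.Icc (x₂ - b) (x₂ + b),
      HasDerivWithinAt (fun y' => g y' z) (Dg y z) (Set.Icc (x₂ - b) (x₂ + b)) y)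
    (hG2lip : ∃ LD : ℝ, ∀ y ∈ Set.Icc (x₂ - b) (x₂ + b), ∀ y' ∈ Set.Icc (x₂ - b) (x₂ + b),
      ∀ z z' : ℝ, 0 ≤ z → 0 ≤ z' → |Dg y z - Dg y' z'| ≤ LD * (|y - y'| + |z - z'|))
    (hG2bd : ∃ M : ℝ, M < K / b ∧
      ∀ y ∈ Set.Icc (x₂ - b) (x₂ + b), ∀ z : ℝ, 0 ≤ z → |Dg y z| ≤ M)
    (hG3 : ∀ y ∈ Set.Icc (x₂ - b) (x₂ + b), ∀ z : ℝ, 0 ≤ z → ε ≤ g y z ∧ g y z ≤ K) :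
    ∀ ψ₀ : C(Set.Icc (-(b / K)) (0:ℝ), ℝ), (∀ θ, 0 ≤ ψ₀ θ) →
      ∃ δ : ℝ, 0 < δ ∧ ∃ L : ℝ, 0 ≤ L ∧
        ∀ ψ ψbar : C(Set.Icc (-(b / K)) (0:ℝ), ℝ),
          (∀ θ, 0 ≤ ψ θ) → (∀ θ, 0 ≤ ψbar θ) →
          ‖ψ - ψ₀‖ ≤ δ → ‖ψbar - ψ₀‖ ≤ δ →
          ∀ y ybar : ℝ → ℝ, IsSolY x₂ b (b / K) g ψ y → IsSolY x₂ b (b / K) g ψbar ybar →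
            ∀ s ∈ Set.Icc (0:ℝ) (b / K), |y s - ybar s| ≤ L * ‖ψ - ψbar‖ := by
  obtain ⟨M, hMK, hM⟩ := hG2bd
  have hK : 0 < K := hε.trans hεK
  set h : ℝ := b / K with hh
  intro ψ₀ hψ₀
  have hh0 : 0 < h := div_pos hb hK
  have hx₂ : x₂ ∈ Set.Icc (x₂ - b) (x₂ + b) := by constructor <;> linarith
  have hM0 : 0 ≤ M := le_trans (abs_nonneg _) (hM x₂ hx₂ 0 le_rfl)
  -- Lipschitz in the first argument with constant M
  have hLy : ∀ z : ℝ, 0 ≤ z → ∀ u ∈ Set.Icc (x₂ - b) (x₂ + b),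
      ∀ v ∈ Set.Icc (x₂ - b) (x₂ + b), |g u z - g v z| ≤ M * |u - v| := by
    intro z hz u hu v hv
    have := Convex.norm_image_sub_le_of_norm_hasDerivWithin_le
      (f := fun y' => g y' z) (f' := fun y' => Dg y' z) (C := M)
      (fun x hx => hG2d z hz x hx) (fun x hx => hM x hx z hz) (convex_Icc _ _) hv hu
    simpa [Real.norm_eq_abs] using this
  -- Uniform Lipschitz constant in the second argument near the range of ψ₀
  choose! δf hδf Lf hLf using hG1
  set S : Set ℝ := Set.range ψ₀ with hS
  have hScompact : IsCompact S := isCompact_range ψ₀.continuous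
  have hSnn : ∀ p ∈ S, (0:ℝ) ≤ p := by rintro p ⟨θ, rfl⟩; exact hψ₀ θ
  have h0mem : (0:ℝ) ∈ Set.Icc (-h) (0:ℝ) := by constructor <;> linarith
  obtain ⟨t, ht⟩ := hScompact.elim_finite_subcover
    (fun i : S => Metric.ball (i : ℝ) (δf i / 2)) (fun i => Metric.isOpen_ball)
    (by
      intro p hp
      exact Set.mem_iUnion.mpr ⟨⟨p, hp⟩, Metric.mem_ball_self (half_pos (hδf p (hSnn p hp)))⟩)
  have htne : t.Nonempty := by
    have hp : (ψ₀ ⟨0, h0mem⟩ : ℝ) ∈ S := ⟨_, rfl⟩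
    obtain ⟨i, hit, -⟩ := Set.mem_iUnion₂.mp (ht hp)
    exact ⟨i, hit⟩
  set δ : ℝ := t.inf' htne (fun i => δf i / 2) with hδdef
  have hδ0 : 0 < δ := by
    rw [hδdef, Finset.lt_inf'_iff]
    exact fun i _ => half_pos (hδf i (hSnn i i.2))
  set L₀ : ℝ := max 0 (t.sup' htne (fun i => Lf i)) with hL₀def
  have hL₀0 : 0 ≤ L₀ := le_max_left _ _
  have key : ∀ p ∈ S, ∀ u ∈ Set.Icc (x₂ - b) (x₂ + b), ∀ z₁ z₂ : ℝ, 0 ≤ z₁ → 0 ≤ z₂ →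
      |z₁ - p| ≤ δ → |z₂ - p| ≤ δ → |g u z₁ - g u z₂| ≤ L₀ * |z₁ - z₂| := by
    intro p hp u hu z₁ z₂ hz₁ hz₂ h1 h2
    obtain ⟨i, hit, hpi⟩ := Set.mem_iUnion₂.mp (ht hp)
    rw [Metric.mem_ball, Real.dist_eq] at hpi
    have hδi : δ ≤ δf i / 2 := Finset.inf'_le _ hit
    have hi0 : (0:ℝ) ≤ i := hSnn i i.2
    have h1' : |z₁ - (i:ℝ)| ≤ δf i := by
      calc |z₁ - (i:ℝ)| ≤ |z₁ - p| + |p - i| := abs_sub_le _ _ _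
        _ ≤ δ + δf i / 2 := add_le_add h1 hpi.le
        _ ≤ δf i := by linarith
    have h2' : |z₂ - (i:ℝ)| ≤ δf i := by
      calc |z₂ - (i:ℝ)| ≤ |z₂ - p| + |p - i| := abs_sub_le _ _ _
        _ ≤ δ + δf i / 2 := add_le_add h2 hpi.le
        _ ≤ δf i := by linarith
    have hLi : Lf i ≤ L₀ := le_max_of_le_right (Finset.le_sup' (fun i : S => Lf (i:ℝ)) hit)
    calc |g u z₁ - g u z₂| ≤ Lf i * |z₁ - z₂| := hLf i hi0 u hu z₁ z₂ hz₁ hz₂ h1' h2'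
      _ ≤ L₀ * |z₁ - z₂| := mul_le_mul_of_nonneg_right hLi (abs_nonneg _)
  -- the Lipschitz constant
  set C : ℝ := (Real.exp ((M + 1) * h) - 1) / (M + 1) with hCdef
  have hexp1 : 1 ≤ Real.exp ((M + 1) * h) := by
    rw [← Real.exp_zero]
    exact Real.exp_le_exp.mpr (by positivity)
  have hC0 : 0 ≤ C := div_nonneg (by linarith) (by linarith)
  refine ⟨δ, hδ0, L₀ * C, mul_nonneg hL₀0 hC0, ?_⟩
  intro ψ ψbar hψ hψbar hdψ hdψbar y ybar hy hybar s hs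
  obtain ⟨hy0, hyP⟩ := hy
  obtain ⟨hyb0, hybP⟩ := hybar
  set n : ℝ := ‖ψ - ψbar‖ with hndef
  have hn0 : 0 ≤ n := norm_nonneg _
  set f : ℝ → ℝ := fun s => y s - ybar s with hfdef
  set f' : ℝ → ℝ := fun s =>
    if hs : s ∈ Set.Icc (0:ℝ) h then
      (-(g (y s) (ψ (negPt h s hs)))) - (-(g (ybar s) (ψbar (negPt h s hs)))) else 0
    with hf'def
  have cont : ContinuousOn f (Set.Icc (0:ℝ) h) := fun u hu =>
    ((hyP u hu).2.continuousWithinAt).sub ((hybP u hu).2.continuousWithinAt)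
  have deriv : ∀ u ∈ Set.Ico (0:ℝ) h, HasDerivWithinAt f (f' u) (Set.Ici u) u := by
    intro u hu
    have hu' : u ∈ Set.Icc (0:ℝ) h := Set.Ico_subset_Icc_self hu
    have hd := ((hyP u hu').2.sub (hybP u hu').2)
    have hmem : Set.Icc (0:ℝ) h ∈ nhdsWithin u (Set.Ici u) :=
      Filter.mem_of_superset (Icc_mem_nhdsGE_of_mem ⟨le_rfl, hu.2⟩)
        (Set.Icc_subset_Icc_left hu.1)
    have hf'u : f' u = (-(g (y u) (ψ (negPt h u hu')))) - (-(g (ybar u) (ψbar (negPt h u hu')))) := by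
      simp only [hf'def]; exact dif_pos hu'
    rw [hf'u]
    exact hd.mono_of_mem_nhdsWithin hmem
  have bound : ∀ u ∈ Set.Ico (0:ℝ) h, ‖f' u‖ ≤ (M + 1) * ‖f u‖ + L₀ * n := by
    intro u hu
    have hu' : u ∈ Set.Icc (0:ℝ) h := Set.Ico_subset_Icc_self hu
    set θ : Set.Icc (-h) (0:ℝ) := negPt h u hu' with hθ
    set z₁ : ℝ := ψ θ with hz₁def
    set z₂ : ℝ := ψbar θ with hz₂def
    have hz₁0 : 0 ≤ z₁ := hψ θ
    have hz₂0 : 0 ≤ z₂ := hψbar θ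
    have hpS : (ψ₀ θ : ℝ) ∈ S := ⟨θ, rfl⟩
    have h1 : |z₁ - ψ₀ θ| ≤ δ := by
      have := (ψ - ψ₀).norm_coe_le_norm θ
      simp only [ContinuousMap.sub_apply, Real.norm_eq_abs] at this
      exact this.trans hdψ
    have h2 : |z₂ - ψ₀ θ| ≤ δ := by
      have := (ψbar - ψ₀).norm_coe_le_norm θ
      simp only [ContinuousMap.sub_apply, Real.norm_eq_abs] at this
      exact this.trans hdψbar
    have hzn : |z₁ - z₂| ≤ n := by
      have := (ψ - ψbar).norm_coe_le_norm θ
      simp only [ContinuousMap.sub_apply, Real.norm_eq_abs] at this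
      exact this
    have hymem := (hyP u hu').1
    have hybmem := (hybP u hu').1
    have e1 : |g (y u) z₁ - g (y u) z₂| ≤ L₀ * n := by
      calc |g (y u) z₁ - g (y u) z₂| ≤ L₀ * |z₁ - z₂| :=
            key _ hpS _ hymem z₁ z₂ hz₁0 hz₂0 h1 h2
        _ ≤ L₀ * n := mul_le_mul_of_nonneg_left hzn hL₀0
    have e2 : |g (y u) z₂ - g (ybar u) z₂| ≤ M * |y u - ybar u| :=
      hLy z₂ hz₂0 _ hymem _ hybmem
    have hf'u : f' u = (-(g (y u) z₁)) - (-(g (ybar u) z₂)) := by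
      simp only [hf'def]; exact dif_pos hu'
    have habs : ‖f' u‖ = |(-(g (y u) z₁)) - (-(g (ybar u) z₂))| := by
      rw [hf'u, Real.norm_eq_abs]
    have hfu : ‖f u‖ = |y u - ybar u| := by simp [hfdef, Real.norm_eq_abs]
    rw [habs, hfu]
    have tri : |(-(g (y u) z₁)) - (-(g (ybar u) z₂))| ≤
        |g (y u) z₁ - g (y u) z₂| + |g (y u) z₂ - g (ybar u) z₂| := by
      have := abs_sub_le (g (y u) z₁) (g (y u) z₂) (g (ybar u) z₂)
      calc |(-(g (y u) z₁)) - (-(g (ybar u) z₂))| = |g (y u) z₁ - g (ybar u) z₂| := by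
            rw [← abs_neg]; ring_nf
        _ ≤ _ := this
    have hfnn : (0:ℝ) ≤ |y u - ybar u| := abs_nonneg _
    calc |(-(g (y u) z₁)) - (-(g (ybar u) z₂))| ≤
          |g (y u) z₁ - g (y u) z₂| + |g (y u) z₂ - g (ybar u) z₂| := tri
      _ ≤ L₀ * n + M * |y u - ybar u| := add_le_add e1 e2
      _ ≤ (M + 1) * |y u - ybar u| + L₀ * n := by nlinarith
  have hfa : ‖f 0‖ ≤ 0 := by simp [hfdef, hy0, hyb0]
  have main := norm_le_gronwallBound_of_norm_deriv_right_le cont deriv hfa bound s hs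
  have hM1 : (0:ℝ) < M + 1 := by linarith
  rw [gronwallBound_of_K_ne_0 (ne_of_gt hM1)] at main
  have hfs : ‖f s‖ = |y s - ybar s| := by simp [hfdef, Real.norm_eq_abs]
  rw [hfs] at main
  have hes : Real.exp ((M + 1) * (s - 0)) ≤ Real.exp ((M + 1) * h) := by
    apply Real.exp_le_exp.mpr
    have := hs.2
    nlinarith [hs.1]
  have hq : (0:ℝ) ≤ L₀ * n / (M + 1) := by positivity
  calc |y s - ybar s| ≤ 0 * Real.exp ((M + 1) * (s - 0)) +
        L₀ * n / (M + 1) * (Real.exp ((M + 1) * (s - 0)) - 1) := main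
    _ = L₀ * n / (M + 1) * (Real.exp ((M + 1) * (s - 0)) - 1) := by ring
    _ ≤ L₀ * n / (M + 1) * (Real.exp ((M + 1) * h) - 1) := by
        apply mul_le_mul_of_nonneg_left _ hq
        linarith
    _ = L₀ * C * n := by
        rw [hCdef]; field_simp
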